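/- arXiv:2309.00589 — 8 statements merged into one kernel-verified Lean document; each statement's English description precedes it below -/
import Mathlib

section
/- For every integer n ≥ 1, D(n,2) = n(n+1)²(n+2)/2. (This is the dimension of the space of rank-2 Killing tensors on CP^n with its Fubini–Study metric.) -/
noncomputable def f (n p q : ℕ) : ℚ :=
  (((n + q - 1).factorial : ℚ) * ((n + p + q).factorial : ℚ) * ((p : ℚ) + 1)) /
    ((q.factorial : ℚ) * ((p + q + 1).factorial : ℚ) * ((n - 1).factorial : ℚ) *
      (n.factorial : ℚ))

noncomputable def S (n k : ℕ) : ℚ :=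
  ∑ pq ∈ (Finset.range (k + 1) ×ˢ Finset.range (k + 1)).filter
      (fun pq => pq.1 + 2 * pq.2 = k), (f n pq.1 pq.2) ^ 2

noncomputable def D (n k : ℕ) : ℚ :=
  S n k - (if k = 0 then 0 else S n (k - 1))

/-- D(n,2) = n(n+1)²(n+2)/2: the dimension of the space of rank-2 Killing tensors
on ℂℙⁿ with its Fubini–Study metric. -/
theorem killing_rank_two_dim (n : ℕ) (hn : 1 ≤ n) :
    D n 2 = (n : ℚ) * ((n : ℚ) + 1) ^ 2 * ((n : ℚ) + 2) / 2 := by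
  obtain ⟨m, rfl⟩ := Nat.exists_eq_add_of_le hn
  have hfact : ((m.factorial : ℚ)) ≠ 0 := Nat.cast_ne_zero.2 m.factorial_ne_zero
  simp only [D, S]
  rw [show (Finset.range 3 ×ˢ Finset.range 3).filter (fun pq => pq.1 + 2 * pq.2 = 2)
      = {(2,0),(0,1)} from by decide,
    show (Finset.range 2 ×ˢ Finset.range 2).filter (fun pq => pq.1 + 2 * pq.2 = 1)
      = {(1,0)} from by decide]
  simp only [Finset.sum_insert, Finset.mem_singleton, Finset.sum_singleton, f]
  norm_num [Nat.factorial]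

  rw [Nat.add_comm 1 m, Nat.factorial_succ]
  push_cast
  have h1 : (m:ℚ)+1 ≠ 0 := by positivity
  field_simp
  ring
end

section
/- For every integer n ≥ 1, D(n,4) = n(n+1)²(n+2)²(7n³+38n²+39n+36)/288. (This is the dimension of the space of rank-4 Killing tensors on CP^n with its Fubini–Study metric.) -/
/-- D(n,4) = n(n+1)²(n+2)²(7n³+38n²+39n+36)/288: the dimension of the space of
rank-4 Killing tensors on ℂℙⁿ with its Fubini–Study metric. -/
theorem killing_rank_four_dim (n : ℕ) (hn : 1 ≤ n) :
    D n 4 = (n : ℚ) * ((n : ℚ) + 1) ^ 2 * ((n : ℚ) + 2) ^ 2 *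
      (7 * (n : ℚ) ^ 3 + 38 * (n : ℚ) ^ 2 + 39 * (n : ℚ) + 36) / 288 := by
  obtain ⟨m, rfl⟩ : ∃ m, n = m + 1 := ⟨n - 1, (Nat.succ_pred_eq_of_pos hn).symm⟩
  have h4 : ((Finset.range 5 ×ˢ Finset.range 5).filter
      (fun pq : ℕ × ℕ => pq.1 + 2 * pq.2 = 4)) = {(4,0),(2,1),(0,2)} := by decide
  have h3 : ((Finset.range 4 ×ˢ Finset.range 4).filter
      (fun pq : ℕ × ℕ => pq.1 + 2 * pq.2 = 3)) = {(3,0),(1,1)} := by decide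
  have hfact : ∀ k : ℕ, ((m + (k+1)).factorial : ℚ) = ((m:ℚ) + (k+1)) * (m + k).factorial := by
    intro k
    have : m + (k+1) = (m + k) + 1 := by omega
    rw [this, Nat.factorial_succ]
    push_cast; ring
  have hm0 : ((m.factorial : ℚ)) ≠ 0 := by exact_mod_cast m.factorial_ne_zero
  simp only [D, S, h4, h3, if_neg (by norm_num : (4:ℕ) ≠ 0)]
  rw [Finset.sum_insert (by decide), Finset.sum_insert (by decide), Finset.sum_singleton,
    Finset.sum_pair (by decide)]
  simp only [f]
  simp only [show m + 1 + 0 - 1 = m + 0 from by omega, show m + 1 + 1 - 1 = m + 1 from by omega,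
    show m + 1 + 2 - 1 = m + 2 from by omega, show m + 1 + 4 + 0 = m + 5 from by omega,
    show m + 1 + 2 + 1 = m + 4 from by omega, show m + 1 + 0 + 2 = m + 3 from by omega,
    show m + 1 + 3 + 0 = m + 4 from by omega, show m + 1 + 1 + 1 = m + 3 from by omega,
    show m + 1 - 1 = m + 0 from by omega, show m + 1 = m + 1 from rfl]
  rw [show (m:ℕ) + 0 = m from rfl]
  rw [show ((m+5:ℕ)) = m + (4+1) from by omega, hfact,
      show ((m+4:ℕ)) = m + (3+1) from by omega, hfact,
      show ((m+3:ℕ)) = m + (2+1) from by omega, hfact,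
      show ((m+2:ℕ)) = m + (1+1) from by omega, hfact,
      show ((m+1:ℕ)) = m + (0+1) from by omega, hfact]
  rw [show m + 0 = m from rfl]
  norm_num [Nat.factorial]
  field_simp
  ring
end

section
/- In the ring of formal power series ℚ⟦t⟧, one has (1−t)⁵ · Σ_{k≥0} DTT(3,k) t^k = 1 + t; that is, the Poincaré series G₃(t) of Killing tensor dimensions on the round 3-sphere equals (1+t)/(1−t)⁵. -/
/-- DTT(n,k) = ((n+k−1)!·(n+k)!) / (k!·(k+1)!·(n−1)!·n!), the dimension of the
space of rank-k Killing tensors on the round n-sphere, as a rational number. -/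
noncomputable def DTT (n k : ℕ) : ℚ :=
  (((n + k - 1).factorial : ℚ) * ((n + k).factorial : ℚ)) /
    ((k.factorial : ℚ) * ((k + 1).factorial : ℚ) * ((n - 1).factorial : ℚ) *
      (n.factorial : ℚ))

lemma DTT3 (k : ℕ) : DTT 3 k = ((k:ℚ)+1)*((k:ℚ)+2)^2*((k:ℚ)+3)/12 := by
  have h2 : 3 + k = k + 3 := by omega
  have h1 : k + 3 - 1 = k + 2 := by omega
  simp only [DTT, h2, h1]
  have e2 : ((k+2).factorial : ℚ) = (k+2)*(k+1)*k.factorial := by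
    push_cast [Nat.factorial_succ]; ring
  have e3 : ((k+3).factorial : ℚ) = (k+3)*(k+2)*(k+1).factorial := by
    push_cast [Nat.factorial_succ]; ring
  rw [e2, e3]
  have hk : (k.factorial : ℚ) ≠ 0 := by positivity
  have hk1 : ((k+1).factorial : ℚ) ≠ 0 := by positivity
  norm_num [Nat.factorial]
  field_simp
  ring

/-- The Poincaré series G_3(t) = Σ_{k≥0} DTT(3,k) tᵏ of Killing tensor dimensions
on the round 3-sphere satisfies (1−t)^5 · G_3(t) = 1 + t. -/
theorem sphere_poincare_series_3 :
    ((1 - PowerSeries.X) ^ 5 : PowerSeries ℚ) * PowerSeries.mk (fun k => DTT 3 k)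
      = 1 + PowerSeries.X := by
  set f : PowerSeries ℚ := PowerSeries.mk (fun k => DTT 3 k) with hf
  have expand : ((1 - PowerSeries.X) ^ 5 : PowerSeries ℚ) * f
      = f - (PowerSeries.C : ℚ →+* PowerSeries ℚ) 5 * (f * PowerSeries.X^1)
        + (PowerSeries.C : ℚ →+* PowerSeries ℚ) 10 * (f * PowerSeries.X^2)
        - (PowerSeries.C : ℚ →+* PowerSeries ℚ) 10 * (f * PowerSeries.X^3)
        + (PowerSeries.C : ℚ →+* PowerSeries ℚ) 5 * (f * PowerSeries.X^4)
        - f * PowerSeries.X^5 := by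
    rw [map_ofNat ((PowerSeries.C : ℚ →+* PowerSeries ℚ)) 5, map_ofNat ((PowerSeries.C : ℚ →+* PowerSeries ℚ)) 10]
    ring
  rw [expand]
  ext n
  simp only [map_sub, map_add, PowerSeries.coeff_C_mul, PowerSeries.coeff_mul_X_pow',
    PowerSeries.coeff_mk, hf, PowerSeries.coeff_one, PowerSeries.coeff_X]
  match n with
  | 0 => norm_num [DTT3]
  | 1 => norm_num [DTT3]
  | 2 => norm_num [DTT3]
  | 3 => norm_num [DTT3]
  | 4 => norm_num [DTT3]
  | (m+5) =>
    have h1 : (1:ℕ) ≤ m+5 := by omega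
    have h2 : (2:ℕ) ≤ m+5 := by omega
    have h3 : (3:ℕ) ≤ m+5 := by omega
    have h4 : (4:ℕ) ≤ m+5 := by omega
    have h5 : (5:ℕ) ≤ m+5 := by omega
    rw [if_pos h1, if_pos h2, if_pos h3, if_pos h4, if_pos h5]
    simp only [show m+5-1 = m+4 from rfl, show m+5-2 = m+3 from rfl,
      show m+5-3 = m+2 from rfl, show m+5-4 = m+1 from rfl, show m+5-5 = m from rfl,
      DTT3]
    push_cast
    norm_num
    ring
end

section
/- In the ring of formal power series ℚ⟦t⟧, one has (1−t)⁷ · Σ_{k≥0} DTT(4,k) t^k = 1 + 3t + t²; that is, the Poincaré series G₄(t) of Killing tensor dimensions on the round 4-sphere equals (1+3t+t²)/(1−t)⁷. -/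
lemma choose_cast (m c : ℕ) (h : 6 ≤ c) :
    ((m + c).choose 6 : ℚ) = ((m + c).factorial : ℚ) / ((Nat.factorial 6 : ℚ) * ((m + (c - 6)).factorial : ℚ)) := by
  rw [Nat.cast_choose ℚ (by omega), show m + c - 6 = m + (c - 6) from by omega]

open PowerSeries in
lemma key : (PowerSeries.mk (fun k => DTT 4 k) : PowerSeries ℚ)
    = PowerSeries.mk (fun n => ((6+n).choose 6 : ℚ)) * (1 + 3*PowerSeries.X + PowerSeries.X^2) := by
  set g : ℕ → ℚ := fun n => ((6+n).choose 6 : ℚ) with hg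
  have h3 : (3 : ℚ⟦X⟧) = PowerSeries.C (R := ℚ) 3 := (map_ofNat (PowerSeries.C (R := ℚ)) 3).symm
  have hrw : (PowerSeries.mk g) * (1 + 3*X + X^2)
      = PowerSeries.mk g + (PowerSeries.C (R := ℚ) 3)*(PowerSeries.mk g * X^1) + PowerSeries.mk g * X^2 := by
    rw [← h3]; ring
  ext k
  rw [hrw]
  simp only [map_add, PowerSeries.coeff_C_mul, PowerSeries.coeff_mul_X_pow', coeff_mk, hg]
  match k with
  | 0 => norm_num [DTT, Nat.factorial]
  | 1 => norm_num [DTT, Nat.factorial]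
  | (m+2) =>
    have e1 : 1 ≤ m + 2 := by omega
    have e2 : 2 ≤ m + 2 := by omega
    rw [if_pos e1, if_pos e2]
    have i1 : 6 + (m + 2) = m + 8 := by omega
    have i2 : 6 + (m + 2 - 1) = m + 7 := by omega
    have i3 : 6 + (m + 2 - 2) = m + 6 := by omega
    rw [i1, i2, i3, choose_cast m 8 (by omega), choose_cast m 7 (by omega),
      choose_cast m 6 (by omega)]
    have j1 : (4 : ℕ) + (m + 2) - 1 = m + 5 := by omega
    have j2 : (4 : ℕ) + (m + 2) = m + 6 := by omega
    have j3 : (m + 2) + 1 = m + 3 := by omega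
    rw [DTT, j1, j2, j3]
    norm_num [Nat.factorial_succ, Nat.factorial]
    have hm : ((m.factorial : ℚ)) ≠ 0 := Nat.cast_ne_zero.mpr m.factorial_ne_zero
    field_simp
    ring

/-- The Poincaré series G_4(t) = Σ_{k≥0} DTT(4,k) tᵏ of Killing tensor dimensions
on the round 4-sphere satisfies (1−t)^7 · G_4(t) = 1 + 3t + t². -/
theorem sphere_poincare_series_4 :
    ((1 - PowerSeries.X) ^ 7 : PowerSeries ℚ) * PowerSeries.mk (fun k => DTT 4 k)
      = 1 + 3 * PowerSeries.X + PowerSeries.X ^ 2 := by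
  have h1 : ((1 - PowerSeries.X) ^ 7 : PowerSeries ℚ)
      * PowerSeries.mk (fun n => ((6+n).choose 6 : ℚ)) = 1 := by
    rw [← PowerSeries.invOneSubPow_inv_eq_one_sub_pow,
      show (7 : ℕ) = 6 + 1 from rfl,
      ← PowerSeries.invOneSubPow_val_succ_eq_mk_add_choose]
    exact (PowerSeries.invOneSubPow ℚ (6+1)).inv_val
  rw [key, ← mul_assoc, h1, one_mul]
end

section
/- In the ring of formal power series ℚ⟦t⟧, one has (1−t)⁹ · Σ_{k≥0} DTT(5,k) t^k = 1 + 6t + 6t² + t³; that is, the Poincaré series G₅(t) of Killing tensor dimensions on the round 5-sphere equals (1+6t+6t²+t³)/(1−t)⁹. -/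
lemma DTT5_eq_choose (k : ℕ) :
    DTT 5 k = 14 * ((k+8).choose 8 : ℚ) - 21 * ((k+7).choose 7)
      + 9 * ((k+6).choose 6) - ((k+5).choose 5) := by
  have hc8 : ((k+8).choose 8 : ℚ) = (k+8).factorial / (Nat.factorial 8 * k.factorial) := by
    rw [Nat.cast_choose ℚ (by omega : 8 ≤ k+8)]; simp
  have hc7 : ((k+7).choose 7 : ℚ) = (k+7).factorial / (Nat.factorial 7 * k.factorial) := by
    rw [Nat.cast_choose ℚ (by omega : 7 ≤ k+7)]; simp
  have hc6 : ((k+6).choose 6 : ℚ) = (k+6).factorial / (Nat.factorial 6 * k.factorial) := by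
    rw [Nat.cast_choose ℚ (by omega : 6 ≤ k+6)]; simp
  have hc5 : ((k+5).choose 5 : ℚ) = (k+5).factorial / (Nat.factorial 5 * k.factorial) := by
    rw [Nat.cast_choose ℚ (by omega : 5 ≤ k+5)]; simp
  have e : ∀ m : ℕ, ((m+1).factorial : ℚ) = (m+1) * m.factorial := by
    intro m; rw [Nat.factorial_succ]; push_cast; ring
  have h0 : (k.factorial : ℚ) ≠ 0 := by exact_mod_cast k.factorial_ne_zero
  rw [DTT, show 5 + k - 1 = k + 4 from by omega, show 5 + k = k + 5 from by omega,
    show (5:ℕ) - 1 = 4 from rfl]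
  rw [hc8, hc7, hc6, hc5,
    show k+8 = k+7+1 from rfl, e (k+7), show k+7 = k+6+1 from rfl, e (k+6),
    show k+6 = k+5+1 from rfl, e (k+5), show k+5 = k+4+1 from rfl, e (k+4),
    show k+4 = k+3+1 from rfl, e (k+3), show k+3 = k+2+1 from rfl, e (k+2),
    show k+2 = k+1+1 from rfl, e (k+1), e k]
  norm_num [Nat.factorial]
  field_simp
  ring

open PowerSeries in
lemma mk_DTT5_eq :
    PowerSeries.mk (fun k => DTT 5 k)
      = C (R := ℚ) 14 * (invOneSubPow ℚ 9).val - C (R := ℚ) 21 * (invOneSubPow ℚ 8).val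
        + C (R := ℚ) 9 * (invOneSubPow ℚ 7).val - (invOneSubPow ℚ 6).val := by
  ext n
  simp only [map_sub, map_add, coeff_C_mul, coeff_mk,
    invOneSubPow_val_succ_eq_mk_add_choose]
  rw [DTT5_eq_choose]
  norm_num [Nat.add_comm]

/-- The Poincaré series G_5(t) = Σ_{k≥0} DTT(5,k) tᵏ of Killing tensor dimensions
on the round 5-sphere satisfies (1−t)^9 · G_5(t) = 1 + 6t + 6t² + t³. -/
theorem sphere_poincare_series_5 :
    ((1 - PowerSeries.X) ^ 9 : PowerSeries ℚ) * PowerSeries.mk (fun k => DTT 5 k)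
      = 1 + 6 * PowerSeries.X + 6 * PowerSeries.X ^ 2 + PowerSeries.X ^ 3 := by
  open PowerSeries in
  have u : ∀ d : ℕ, ((1 - X : ℚ⟦X⟧) ^ d) * (invOneSubPow ℚ d).val = 1 := by
    intro d
    rw [← invOneSubPow_inv_eq_one_sub_pow]
    exact (invOneSubPow ℚ d).inv_val
  rw [mk_DTT5_eq]
  have expand : ((1 - X) ^ 9 : ℚ⟦X⟧) *
      (C (R := ℚ) 14 * (invOneSubPow ℚ 9).val - C (R := ℚ) 21 * (invOneSubPow ℚ 8).val
        + C (R := ℚ) 9 * (invOneSubPow ℚ 7).val - (invOneSubPow ℚ 6).val)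
      = C (R := ℚ) 14 * ((1 - X) ^ 9 * (invOneSubPow ℚ 9).val)
        - C (R := ℚ) 21 * (1 - X) * ((1 - X) ^ 8 * (invOneSubPow ℚ 8).val)
        + C (R := ℚ) 9 * (1 - X) ^ 2 * ((1 - X) ^ 7 * (invOneSubPow ℚ 7).val)
        - (1 - X) ^ 3 * ((1 - X) ^ 6 * (invOneSubPow ℚ 6).val) := by ring
  rw [expand, u 9, u 8, u 7, u 6]
  have c14 : (C (R := ℚ) 14 : ℚ⟦X⟧) = 14 := map_ofNat (C (R := ℚ)) 14
  have c21 : (C (R := ℚ) 21 : ℚ⟦X⟧) = 21 := map_ofNat (C (R := ℚ)) 21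
  have c9 : (C (R := ℚ) 9 : ℚ⟦X⟧) = 9 := map_ofNat (C (R := ℚ)) 9
  rw [c14, c21, c9]
  ring
end

section
/- In the ring of formal power series ℚ⟦t⟧, one has (1−t)⁷ · Σ_{k≥0} D(2,k) t^k = 1 + t + t²; that is, the Poincaré series H₂(t) of Killing tensor dimensions on CP² equals (1+t+t²)/(1−t)⁷. -/
open PowerSeries

noncomputable def FF (a : ℕ) : PowerSeries ℚ := PowerSeries.mk fun n => ((n:ℚ)+1)^a

noncomputable def GG (a : ℕ) : PowerSeries ℚ :=
  PowerSeries.mk fun n => if Even n then (((n/2 : ℕ) : ℚ) + 1)^a else 0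

lemma GG_coeff_odd (a j : ℕ) (h : j % 2 = 1) : coeff (R := ℚ) j (GG a) = 0 := by
  simp [GG, coeff_mk, Nat.even_iff, h]

lemma f_two (p q : ℕ) : f 2 p q = ((p:ℚ)+1)*((q:ℚ)+1)*((p:ℚ)+(q:ℚ)+2)/2 := by
  unfold f
  rw [show 2+q-1 = q+1 from by omega, show 2+p+q = (p+q+1)+1 from by omega,
    show (2:ℕ)-1 = 1 from rfl]
  rw [Nat.factorial_succ q, Nat.factorial_succ (p+q+1), Nat.factorial_one,
    Nat.factorial_two]
  have hq : (q.factorial : ℚ) ≠ 0 := Nat.cast_ne_zero.mpr (Nat.factorial_ne_zero _)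
  have hpq : ((p+q+1).factorial : ℚ) ≠ 0 := Nat.cast_ne_zero.mpr (Nat.factorial_ne_zero _)
  push_cast
  field_simp
  ring

lemma hFF2 : FF 2 * (1 - X)^3 = 1 + X := by
  have e2 : FF 2 * (1-X)^3
      = FF 2 - C (R := ℚ) 3 * (FF 2 * X^1) + C (R := ℚ) 3 * (FF 2 * X^2) - FF 2 * X^3 := by
    rw [show ((1:ℚ⟦X⟧) - X)^3 = 1 - C (R := ℚ) 3 * X^1 + C (R := ℚ) 3 * X^2 - X^3 by
      simp only [map_ofNat]; ring]
    ring
  rw [e2]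
  ext n
  rw [map_sub, map_add, map_sub, coeff_C_mul, coeff_C_mul, coeff_mul_X_pow',
    coeff_mul_X_pow', coeff_mul_X_pow', map_add, coeff_one, coeff_X]
  rcases n with _|_|_|m
  · norm_num [FF, coeff_mk]
  · norm_num [FF, coeff_mk]
  · norm_num [FF, coeff_mk]
  · have h1 : m+3-1 = m+2 := by omega
    have h2 : m+3-2 = m+1 := by omega
    have h3 : m+3-3 = m := by omega
    simp only [FF, coeff_mk, h1, h2, h3]
    norm_num
    ring

lemma hFF3 : FF 3 * (1 - X)^4 = 1 + C (R := ℚ) 4 * X + X^2 := by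
  have e2 : FF 3 * (1-X)^4
      = FF 3 - C (R := ℚ) 4 * (FF 3 * X^1) + C (R := ℚ) 6 * (FF 3 * X^2) - C (R := ℚ) 4 * (FF 3 * X^3)
        + FF 3 * X^4 := by
    rw [show ((1:ℚ⟦X⟧) - X)^4 = 1 - C (R := ℚ) 4 * X^1 + C (R := ℚ) 6 * X^2 - C (R := ℚ) 4 * X^3 + X^4 by
      simp only [map_ofNat]; ring]
    ring
  rw [e2]
  ext n
  rw [map_add, map_sub, map_add, map_sub, coeff_C_mul, coeff_C_mul, coeff_C_mul,
    coeff_mul_X_pow', coeff_mul_X_pow', coeff_mul_X_pow', coeff_mul_X_pow',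
    map_add, map_add, coeff_one, coeff_C_mul, coeff_X, coeff_X_pow]
  rcases n with _|_|_|_|m
  · norm_num [FF, coeff_mk]
  · norm_num [FF, coeff_mk]
  · norm_num [FF, coeff_mk]
  · norm_num [FF, coeff_mk]
  · have h1 : m+4-1 = m+3 := by omega
    have h2 : m+4-2 = m+2 := by omega
    have h3 : m+4-3 = m+1 := by omega
    have h4 : m+4-4 = m := by omega
    simp only [FF, coeff_mk, h1, h2, h3, h4]
    norm_num
    push_cast
    ring

lemma hFF4 : FF 4 * (1 - X)^5 = 1 + C (R := ℚ) 11 * X + C (R := ℚ) 11 * X^2 + X^3 := by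
  have e2 : FF 4 * (1-X)^5
      = FF 4 - C (R := ℚ) 5 * (FF 4 * X^1) + C (R := ℚ) 10 * (FF 4 * X^2) - C (R := ℚ) 10 * (FF 4 * X^3)
        + C (R := ℚ) 5 * (FF 4 * X^4) - FF 4 * X^5 := by
    rw [show ((1:ℚ⟦X⟧) - X)^5
        = 1 - C (R := ℚ) 5 * X^1 + C (R := ℚ) 10 * X^2 - C (R := ℚ) 10 * X^3 + C (R := ℚ) 5 * X^4 - X^5 by
      simp only [map_ofNat]; ring]
    ring
  rw [e2]
  ext n
  rw [map_sub, map_add, map_sub, map_add, map_sub, coeff_C_mul, coeff_C_mul, coeff_C_mul,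
    coeff_C_mul, coeff_mul_X_pow', coeff_mul_X_pow', coeff_mul_X_pow', coeff_mul_X_pow',
    coeff_mul_X_pow', map_add, map_add, map_add, coeff_one, coeff_C_mul, coeff_C_mul,
    coeff_X, coeff_X_pow, coeff_X_pow]
  rcases n with _|_|_|_|_|m
  · norm_num [FF, coeff_mk]
  · norm_num [FF, coeff_mk]
  · norm_num [FF, coeff_mk]
  · norm_num [FF, coeff_mk]
  · norm_num [FF, coeff_mk]
  · have h1 : m+5-1 = m+4 := by omega
    have h2 : m+5-2 = m+3 := by omega
    have h3 : m+5-3 = m+2 := by omega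
    have h4 : m+5-4 = m+1 := by omega
    have h5 : m+5-5 = m := by omega
    simp only [FF, coeff_mk, h1, h2, h3, h4, h5]
    norm_num
    push_cast
    ring

lemma hGG2 : GG 2 * (1 - X^2)^3 = 1 + X^2 := by
  have e2 : GG 2 * (1-X^2)^3
      = GG 2 - C (R := ℚ) 3 * (GG 2 * (X^2)^1) + C (R := ℚ) 3 * (GG 2 * X^4) - GG 2 * X^6 := by
    rw [show ((1:ℚ⟦X⟧) - X^2)^3 = 1 - C (R := ℚ) 3 * (X^2)^1 + C (R := ℚ) 3 * X^4 - X^6 by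
      simp only [map_ofNat]; ring]
    ring
  rw [show ((X:ℚ⟦X⟧)^2)^1 = X^2 from pow_one _] at e2
  rw [e2]
  ext n
  rw [map_sub, map_add, map_sub, coeff_C_mul, coeff_C_mul, coeff_mul_X_pow',
    coeff_mul_X_pow', coeff_mul_X_pow', map_add, coeff_one, coeff_X_pow]
  rcases Nat.even_or_odd n with ⟨m, rfl⟩ | ⟨m, rfl⟩
  · rcases m with _|_|_|m
    · norm_num [GG, coeff_mk, Nat.even_iff]
    · norm_num [GG, coeff_mk, Nat.even_iff]
    · norm_num [GG, coeff_mk, Nat.even_iff]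
    · have h0 : (m+3) + (m+3) = 2*(m+3) := by omega
      have h1 : 2*(m+3)-2 = 2*(m+2) := by omega
      have h2 : 2*(m+3)-4 = 2*(m+1) := by omega
      have h3 : 2*(m+3)-6 = 2*m := by omega
      simp only [GG, coeff_mk, h0, h1, h2, h3, if_pos (even_two_mul _),
        if_pos (show 2 ≤ 2*(m+3) by omega), if_pos (show 4 ≤ 2*(m+3) by omega),
        if_pos (show 6 ≤ 2*(m+3) by omega), Nat.mul_div_cancel_left _ (by norm_num : 0 < 2)]
      rw [if_neg (by omega), if_neg (by omega)]
      push_cast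
      ring
  · have T : ∀ (c : Prop) [Decidable c] (j : ℕ), (c → j % 2 = 1) →
        (if c then coeff (R := ℚ) j (GG 2) else 0) = 0 := by
      intro c _ j hj
      split_ifs with h
      · exact GG_coeff_odd _ _ (hj h)
      · rfl
    rw [GG_coeff_odd _ _ (by omega), T _ _ (by omega), T _ _ (by omega), T _ _ (by omega),
      if_neg (by omega), if_neg (by omega)]
    ring

lemma hGG3 : GG 3 * (1 - X^2)^4 = 1 + C (R := ℚ) 4 * X^2 + X^4 := by
  have e2 : GG 3 * (1-X^2)^4
      = GG 3 - C (R := ℚ) 4 * (GG 3 * X^2) + C (R := ℚ) 6 * (GG 3 * X^4) - C (R := ℚ) 4 * (GG 3 * X^6)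
        + GG 3 * X^8 := by
    rw [show ((1:ℚ⟦X⟧) - X^2)^4 = 1 - C (R := ℚ) 4 * X^2 + C (R := ℚ) 6 * X^4 - C (R := ℚ) 4 * X^6 + X^8 by
      simp only [map_ofNat]; ring]
    ring
  rw [e2]
  ext n
  rw [map_add, map_sub, map_add, map_sub, coeff_C_mul, coeff_C_mul, coeff_C_mul,
    coeff_mul_X_pow', coeff_mul_X_pow', coeff_mul_X_pow', coeff_mul_X_pow',
    map_add, map_add, coeff_one, coeff_C_mul, coeff_X_pow, coeff_X_pow]
  rcases Nat.even_or_odd n with ⟨m, rfl⟩ | ⟨m, rfl⟩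
  · rcases m with _|_|_|_|m
    · norm_num [GG, coeff_mk, Nat.even_iff]
    · norm_num [GG, coeff_mk, Nat.even_iff]
    · norm_num [GG, coeff_mk, Nat.even_iff]
    · norm_num [GG, coeff_mk, Nat.even_iff]
    · have h0 : (m+4) + (m+4) = 2*(m+4) := by omega
      have h1 : 2*(m+4)-2 = 2*(m+3) := by omega
      have h2 : 2*(m+4)-4 = 2*(m+2) := by omega
      have h3 : 2*(m+4)-6 = 2*(m+1) := by omega
      have h4 : 2*(m+4)-8 = 2*m := by omega
      simp only [GG, coeff_mk, h0, h1, h2, h3, h4, if_pos (even_two_mul _),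
        if_pos (show 2 ≤ 2*(m+4) by omega), if_pos (show 4 ≤ 2*(m+4) by omega),
        if_pos (show 6 ≤ 2*(m+4) by omega), if_pos (show 8 ≤ 2*(m+4) by omega),
        Nat.mul_div_cancel_left _ (by norm_num : 0 < 2)]
      rw [if_neg (by omega), if_neg (by omega), if_neg (by omega)]
      push_cast
      ring
  · have T : ∀ (c : Prop) [Decidable c] (j : ℕ), (c → j % 2 = 1) →
        (if c then coeff (R := ℚ) j (GG 3) else 0) = 0 := by
      intro c _ j hj
      split_ifs with h
      · exact GG_coeff_odd _ _ (hj h)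
      · rfl
    rw [GG_coeff_odd _ _ (by omega), T _ _ (by omega), T _ _ (by omega), T _ _ (by omega),
      T _ _ (by omega), if_neg (by omega), if_neg (by omega), if_neg (by omega)]
    ring

lemma hGG4 : GG 4 * (1 - X^2)^5 = 1 + C (R := ℚ) 11 * X^2 + C (R := ℚ) 11 * X^4 + X^6 := by
  have e2 : GG 4 * (1-X^2)^5
      = GG 4 - C (R := ℚ) 5 * (GG 4 * X^2) + C (R := ℚ) 10 * (GG 4 * X^4) - C (R := ℚ) 10 * (GG 4 * X^6)
        + C (R := ℚ) 5 * (GG 4 * X^8) - GG 4 * X^10 := by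
    rw [show ((1:ℚ⟦X⟧) - X^2)^5
        = 1 - C (R := ℚ) 5 * X^2 + C (R := ℚ) 10 * X^4 - C (R := ℚ) 10 * X^6 + C (R := ℚ) 5 * X^8 - X^10 by
      simp only [map_ofNat]; ring]
    ring
  rw [e2]
  ext n
  rw [map_sub, map_add, map_sub, map_add, map_sub, coeff_C_mul, coeff_C_mul, coeff_C_mul,
    coeff_C_mul, coeff_mul_X_pow', coeff_mul_X_pow', coeff_mul_X_pow', coeff_mul_X_pow',
    coeff_mul_X_pow', map_add, map_add, map_add, coeff_one, coeff_C_mul, coeff_C_mul,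
    coeff_X_pow, coeff_X_pow, coeff_X_pow]
  rcases Nat.even_or_odd n with ⟨m, rfl⟩ | ⟨m, rfl⟩
  · rcases m with _|_|_|_|_|m
    · norm_num [GG, coeff_mk, Nat.even_iff]
    · norm_num [GG, coeff_mk, Nat.even_iff]
    · norm_num [GG, coeff_mk, Nat.even_iff]
    · norm_num [GG, coeff_mk, Nat.even_iff]
    · norm_num [GG, coeff_mk, Nat.even_iff]
    · have h0 : (m+5) + (m+5) = 2*(m+5) := by omega
      have h1 : 2*(m+5)-2 = 2*(m+4) := by omega
      have h2 : 2*(m+5)-4 = 2*(m+3) := by omega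
      have h3 : 2*(m+5)-6 = 2*(m+2) := by omega
      have h4 : 2*(m+5)-8 = 2*(m+1) := by omega
      have h5 : 2*(m+5)-10 = 2*m := by omega
      simp only [GG, coeff_mk, h0, h1, h2, h3, h4, h5, if_pos (even_two_mul _),
        if_pos (show 2 ≤ 2*(m+5) by omega), if_pos (show 4 ≤ 2*(m+5) by omega),
        if_pos (show 6 ≤ 2*(m+5) by omega), if_pos (show 8 ≤ 2*(m+5) by omega),
        if_pos (show 10 ≤ 2*(m+5) by omega),
        Nat.mul_div_cancel_left _ (by norm_num : 0 < 2)]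
      rw [if_neg (by omega), if_neg (by omega), if_neg (by omega), if_neg (by omega)]
      push_cast
      ring
  · have T : ∀ (c : Prop) [Decidable c] (j : ℕ), (c → j % 2 = 1) →
        (if c then coeff (R := ℚ) j (GG 4) else 0) = 0 := by
      intro c _ j hj
      split_ifs with h
      · exact GG_coeff_odd _ _ (hj h)
      · rfl
    rw [GG_coeff_odd _ _ (by omega), T _ _ (by omega), T _ _ (by omega), T _ _ (by omega),
      T _ _ (by omega), T _ _ (by omega),
      if_neg (by omega), if_neg (by omega), if_neg (by omega), if_neg (by omega)]
    ring

lemma hS : FF 4 * GG 2 + FF 3 * GG 3 + FF 3 * GG 3 + FF 2 * GG 4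
    = C (R := ℚ) 4 * PowerSeries.mk (fun k => S 2 k) := by
  ext k
  rw [map_add, map_add, map_add, coeff_C_mul, coeff_mk]
  simp only [coeff_mul]
  rw [← Finset.sum_add_distrib, ← Finset.sum_add_distrib, ← Finset.sum_add_distrib]
  unfold S
  rw [Finset.mul_sum]
  rw [← Finset.sum_filter_of_ne (p := fun x => Even x.2) (by
    intro x hx hne
    by_contra hodd
    apply hne
    simp [FF, GG, coeff_mk, hodd])]
  refine Finset.sum_bij' (fun x _ => (x.1, x.2/2)) (fun y _ => (y.1, 2*y.2)) ?_ ?_ ?_ ?_ ?_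
  · intro a ha
    simp only [Finset.mem_filter, Finset.mem_antidiagonal, Finset.HasAntidiagonal.mem_antidiagonal, Nat.even_iff] at ha
    simp only [Finset.mem_filter, Finset.mem_product, Finset.mem_range]
    omega
  · intro a ha
    simp only [Finset.mem_filter, Finset.mem_product, Finset.mem_range] at ha
    simp only [Finset.mem_filter, Finset.mem_antidiagonal, Finset.HasAntidiagonal.mem_antidiagonal, Nat.even_iff]
    omega
  · intro a ha
    simp only [Finset.mem_filter, Finset.mem_antidiagonal, Finset.HasAntidiagonal.mem_antidiagonal, Nat.even_iff] at ha
    have : 2 * (a.2 / 2) = a.2 := by omega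
    simp [this]
  · intro a ha
    simp
  · intro x hx
    simp only [Finset.mem_filter, Finset.mem_antidiagonal, Finset.HasAntidiagonal.mem_antidiagonal] at hx
    obtain ⟨hsum, c, hc⟩ := hx
    have hdiv : x.2 / 2 = c := by omega
    have hev : Even x.2 := ⟨c, hc⟩
    simp only [FF, GG, coeff_mk, hdiv, if_pos hev, f_two]
    ring

lemma hD : PowerSeries.mk (fun k => D 2 k)
    = (1 - X) * PowerSeries.mk (fun k => S 2 k) := by
  ext n
  rw [sub_mul, one_mul, map_sub, coeff_mk]
  cases n with
  | zero =>
      simp [D, coeff_mk]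
  | succ n =>
      rw [coeff_succ_X_mul, coeff_mk, coeff_mk]
      simp [D]

/-- The Poincaré series H_2(t) = Σ_{k≥0} D(2,k) tᵏ of Killing tensor dimensions
on ℂℙ^2 satisfies (1−t)^7 · H_2(t) = 1 + t + t². -/
theorem cpn_poincare_series_2 :
    ((1 - PowerSeries.X) ^ 7 : PowerSeries ℚ) * PowerSeries.mk (fun k => D 2 k)
      = 1 + PowerSeries.X + PowerSeries.X ^ 2 := by
  have h2 := hFF2
  have h3 := hFF3
  have h4 := hFF4
  have g2 := hGG2
  have g3 := hGG3
  have g4 := hGG4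
  have hs := hS
  simp only [map_ofNat] at h3 h4 g3 g4 hs
  have hne : ((4:ℚ⟦X⟧) * (1+X)^5) ≠ 0 := by
    intro hzero
    have h0 := congrArg (PowerSeries.constantCoeff (R := ℚ)) hzero
    simp only [map_mul, map_pow, map_add, map_one, map_ofNat, map_zero,
      constantCoeff_X] at h0
    norm_num at h0
  apply mul_left_cancel₀ hne
  have H1 : (FF 4 * (1-X)^5) * (GG 2 * (1-X^2)^3)
      = (1 + 11*X + 11*X^2 + X^3) * (1 + X^2) := by rw [h4, g2]
  have H2 : (FF 3 * (1-X)^4) * (GG 3 * (1-X^2)^4)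
      = (1 + 4*X + X^2) * (1 + 4*X^2 + X^4) := by rw [h3, g3]
  have H3 : (FF 2 * (1-X)^3) * (GG 4 * (1-X^2)^5)
      = (1 + X) * (1 + 11*X^2 + 11*X^4 + X^6) := by rw [h2, g4]
  calc (4:ℚ⟦X⟧) * (1+X)^5 * ((1 - X)^7 * PowerSeries.mk (fun k => D 2 k))
      = (1+X)^5 * (1-X)^8 * ((4:ℚ⟦X⟧) * PowerSeries.mk (fun k => S 2 k)) := by
        rw [hD]; ring
    _ = (1+X)^5 * (1-X)^8 * (FF 4 * GG 2 + FF 3 * GG 3 + FF 3 * GG 3 + FF 2 * GG 4) := by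
        rw [hs]
    _ = (4:ℚ⟦X⟧) * (1+X)^5 * (1 + X + X^2) := by
        linear_combination (((1:ℚ⟦X⟧)+X)^2) * H1 + ((1:ℚ⟦X⟧)+X) * H2
          + ((1:ℚ⟦X⟧)+X) * H2 + H3
end

section
/- In the ring of formal power series ℚ⟦t⟧, one has (1−t)¹⁵ · Σ_{k≥0} D(4,k) t^k = 1 + 9t + 45t² + 65t³ + 45t⁴ + 9t⁵ + t⁶; that is, the Poincaré series H₄(t) of Killing tensor dimensions on CP⁴ equals (1+9t+45t²+65t³+45t⁴+9t⁵+t⁶)/(1−t)¹⁵. -/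
set_option maxHeartbeats 4000000


open PowerSeries Finset

/-- falling-factorial basis E j k = C(k, j) as a rational. -/
noncomputable def E (j k : ℕ) : ℚ :=
  (∏ i ∈ Finset.range j, ((k : ℚ) - i)) / (j.factorial : ℚ)

lemma E_succ (j k : ℕ) : E (j+1) (k+1) = E (j+1) k + E j k := by
  have h1 : (∏ i ∈ Finset.range (j+1), (((k:ℚ)+1) - i))
      = ((k:ℚ)+1) * ∏ i ∈ Finset.range j, ((k:ℚ) - i) := by
    rw [Finset.prod_range_succ']
    have h0 : (∏ i ∈ Finset.range j, (((k:ℚ)+1) - ((i+1:ℕ):ℚ)))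
        = ∏ i ∈ Finset.range j, ((k:ℚ) - (i:ℚ)) :=
      Finset.prod_congr rfl fun i _ => by push_cast; ring
    rw [h0]
    push_cast
    ring
  have h2 : (∏ i ∈ Finset.range (j+1), ((k:ℚ) - i))
      = (∏ i ∈ Finset.range j, ((k:ℚ) - i)) * ((k:ℚ) - j) := Finset.prod_range_succ _ _
  have hf : ((j+1).factorial : ℚ) = ((j:ℚ)+1) * (j.factorial : ℚ) := by
    rw [Nat.factorial_succ]; push_cast; ring
  have hfne : (j.factorial : ℚ) ≠ 0 := Nat.cast_ne_zero.mpr j.factorial_ne_zero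
  have hfne1 : ((j:ℚ)+1) ≠ 0 := by positivity
  unfold E
  rw [hf]
  have hcast : ((k+1 : ℕ) : ℚ) = (k:ℚ)+1 := by push_cast; ring
  rw [hcast, h1, h2]
  field_simp
  ring

lemma E_succ_zero (j : ℕ) : E (j+1) 0 = 0 := by
  unfold E
  rw [Finset.prod_eq_zero (Finset.mem_range.mpr (Nat.succ_pos j)) (by norm_num)]
  simp

lemma keyA (j : ℕ) : ((1 - X) ^ (j+1) : PowerSeries ℚ) * PowerSeries.mk (fun k => E j k)
    = X ^ j := by
  induction j with
  | zero =>
    rw [pow_one, pow_zero]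
    have : ((1 - X) : PowerSeries ℚ) * PowerSeries.mk (fun k => E 0 k)
        = PowerSeries.mk (fun k => E 0 k) - X * PowerSeries.mk (fun k => E 0 k) := by ring
    rw [this]
    ext n
    cases n with
    | zero => simp [E]
    | succ n => simp [E, PowerSeries.coeff_succ_X_mul]
  | succ j ih =>
    have hstep : ((1 - X) : PowerSeries ℚ) * PowerSeries.mk (fun k => E (j+1) k)
        = X * PowerSeries.mk (fun k => E j k) := by
      have h : ((1 - X) : PowerSeries ℚ) * PowerSeries.mk (fun k => E (j+1) k)
          = PowerSeries.mk (fun k => E (j+1) k) - X * PowerSeries.mk (fun k => E (j+1) k) := by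
        ring
      rw [h]
      ext n
      cases n with
      | zero => simp [E_succ_zero]
      | succ n =>
        rw [map_sub, PowerSeries.coeff_succ_X_mul, PowerSeries.coeff_succ_X_mul,
          PowerSeries.coeff_mk, PowerSeries.coeff_mk, PowerSeries.coeff_mk, E_succ]
        ring
    calc ((1 - X) ^ (j+1+1) : PowerSeries ℚ) * PowerSeries.mk (fun k => E (j+1) k)
        = (1 - X) ^ (j+1) * (((1 - X) : PowerSeries ℚ) * PowerSeries.mk (fun k => E (j+1) k)) := by
          ring
      _ = (1 - X) ^ (j+1) * (X * PowerSeries.mk (fun k => E j k)) := by rw [hstep]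
      _ = X * ((1 - X) ^ (j+1) * PowerSeries.mk (fun k => E j k)) := by ring
      _ = X * X ^ j := by rw [ih]
      _ = X ^ (j+1) := by ring

lemma keyB (j : ℕ) (hj : j ≤ 15) :
    ((1 - X) ^ 16 : PowerSeries ℚ) * PowerSeries.mk (fun k => E j k)
      = X ^ j * (1 - X) ^ (15 - j) := by
  have h16 : (16 : ℕ) = (j+1) + (15 - j) := by omega
  rw [h16, pow_add, mul_right_comm, keyA]

/-- the summand f(4, k-2q, q)^2 as a rational function of x=k and q. -/
noncomputable def hQ (x q : ℚ) : ℚ :=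
  ((q+1)*(q+2)*(q+3)*(x-q+2)*(x-q+3)*(x-q+4)*(x-2*q+1))^2 / 20736

/-- closed form of the partial sums of hQ. -/
noncomputable def HQ (x m : ℚ) : ℚ :=
  (6181339392*m + 9937287360*m^2 - 11479916448*m^3 - 12694762080*m^4 + 10985382408*m^5 + 5377832460*m^6 - 4686740916*m^7 - 732792060*m^8 + 951770820*m^9 - 32252220*m^10 - 86100924*m^11 + 13513500*m^12 + 2323860*m^13 - 720720*m^14 + 48048*m^15 + 13403275200*x*m + 32441481072*x*m^2 - 11398427040*x*m^3 - 39333714420*x*m^4 + 9130981860*x*m^5 + 17963051106*x*m^6 - 4251707460*x*m^7 - 3574861290*x*m^8 + 1003302300*x*m^9 + 292474182*x*m^10 - 107862300*x*m^11 - 4294290*x*m^12 + 4213440*x*m^13 - 360360*x*m^14 + 11954895120*x^2*m + 40022302320*x^2*m^2 + 7888080200*x^2*m^3 - 39801852090*x^2*m^4 - 8125427310*x^2*m^5 + 16177731570*x^2*m^6 + 1930388460*x^2*m^7 - 3116123010*x^2*m^8 - 76286210*x^2*m^9 + 284594310*x^2*m^10 - 16085160*x^2*m^11 - 9909900*x^2*m^12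 + 1178100*x^2*m^13 + 5777993520*x^3*m + 25755649920*x^3*m^2 + 16645508880*x^3*m^3 - 17075148090*x^3*m^4 - 12279987720*x^3*m^5 + 4920025110*x^3*m^6 + 3066174540*x^3*m^7 - 752972220*x^3*m^8 - 312912600*x^3*m^9 + 62732670*x^3*m^10 + 11318580*x^3*m^11 - 2192190*x^3*m^12 + 1665989676*x^4*m + 9726386670*x^4*m^2 + 10225465250*x^4*m^3 - 2180583405*x^4*m^4 - 5483574096*x^4*m^5 - 259188930*x^4*m^6 + 1046039280*x^4*m^7 + 90225135*x^4*m^8 - 84574490*x^4*m^9 - 4954950*x^4*m^10 + 2538900*x^4*m^11 + 294980400*x^5*m + 2245511268*x^5*m^2 + 3225161940*x^5*m^3 + 728783055*x^5*m^4 - 1016935920*x^5*m^5 - 430576146*x^5*m^6 + 93667860*x^5*m^7 + 52747695*x^5*m^8 - 2282280*x^5*m^9 - 1873872*x^5*m^10 + 31454280*x^6*m + 313152840*x^6*m^2 + 567607040*x^6*m^3 + 309324015*x^6*m^4 - 36876840*x^6*m^5 - 74864790*x^6*m^6 - 11694540*x^6*m^7 + 3738735*x^6*m^8 + 860860*x^6*m^9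 + 1853280*x^7*m + 24324300*x^7*m^2 + 53153100*x^7*m^3 + 43017975*x^7*m^4 + 11531520*x^7*m^5 - 2252250*x^7*m^6 - 1673100*x^7*m^7 - 225225*x^7*m^8 + 46332*x^8*m + 810810*x^8*m^2 + 2072070*x^8*m^3 + 2162160*x^8*m^4 + 1099098*x^8*m^5 + 270270*x^8*m^6 + 25740*x^8*m^7) / 3736212480

lemma tele (x : ℚ) : ∀ m : ℕ, ∑ q ∈ Finset.range m, hQ x (q : ℚ) = HQ x (m : ℚ)
  | 0 => by simp [HQ]
  | (m+1) => by
    rw [Finset.sum_range_succ, tele x m]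
    show HQ x (m:ℚ) + hQ x (m:ℚ) = _
    unfold HQ hQ
    push_cast
    ring

lemma fact_shift3 (q : ℕ) : ((q+3).factorial : ℚ)
    = ((q:ℚ)+3)*((q:ℚ)+2)*((q:ℚ)+1)*(q.factorial : ℚ) := by
  rw [show q+3 = (q+2)+1 from rfl, Nat.factorial_succ, show q+2 = (q+1)+1 from rfl,
    Nat.factorial_succ, Nat.factorial_succ]
  push_cast
  ring

lemma f4_eval (p q : ℕ) : f 4 p q
    = ((q:ℚ)+1)*((q:ℚ)+2)*((q:ℚ)+3)*((p:ℚ)+(q:ℚ)+2)*((p:ℚ)+(q:ℚ)+3)*((p:ℚ)+(q:ℚ)+4)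
      *((p:ℚ)+1) / 144 := by
  unfold f
  have e1 : 4 + q - 1 = q + 3 := by omega
  have e2 : 4 + p + q = (p + q + 1) + 3 := by omega
  rw [e1, e2, fact_shift3, fact_shift3]
  have hq : ((q.factorial : ℚ)) ≠ 0 := Nat.cast_ne_zero.mpr q.factorial_ne_zero
  have hpq : (((p+q+1).factorial : ℚ)) ≠ 0 := Nat.cast_ne_zero.mpr (p+q+1).factorial_ne_zero
  have h3 : ((4-1 : ℕ).factorial : ℚ) = 6 := by norm_num [Nat.factorial]
  have h4 : ((4 : ℕ).factorial : ℚ) = 24 := by norm_num [Nat.factorial]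
  rw [h3, h4]
  push_cast
  field_simp
  ring

lemma S_eq_sum (k : ℕ) : S 4 k = ∑ q ∈ Finset.range (k/2 + 1), (f 4 (k - 2*q) q)^2 := by
  unfold S
  refine Finset.sum_nbij' (fun pq => pq.2) (fun q => (k - 2*q, q)) ?_ ?_ ?_ ?_ ?_
  · intro a ha
    simp only [Finset.mem_filter, Finset.mem_product, Finset.mem_range] at ha ⊢
    omega
  · intro q hq
    simp only [Finset.mem_range] at hq
    simp only [Finset.mem_filter, Finset.mem_product, Finset.mem_range]
    omega
  · intro a ha
    simp only [Finset.mem_filter, Finset.mem_product, Finset.mem_range] at ha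
    have : a.1 = k - 2*a.2 := by omega
    exact Prod.ext this.symm rfl
  · intro q hq
    rfl
  · intro a ha
    simp only [Finset.mem_filter, Finset.mem_product, Finset.mem_range] at ha
    have : a.1 = k - 2*a.2 := by omega
    rw [this]

lemma f4_sq (k q : ℕ) (h : 2*q ≤ k) : (f 4 (k - 2*q) q)^2 = hQ (k : ℚ) (q : ℚ) := by
  rw [f4_eval]
  have hc : (((k - 2*q : ℕ)) : ℚ) = (k:ℚ) - 2*(q:ℚ) := by
    push_cast [Nat.cast_sub h]
    ring
  rw [hc]
  unfold hQ
  ring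

lemma S4_closed (k : ℕ) : S 4 k = HQ (k : ℚ) ((k/2 + 1 : ℕ) : ℚ) := by
  rw [S_eq_sum, ← tele]
  apply Finset.sum_congr rfl
  intro q hq
  apply f4_sq
  simp only [Finset.mem_range] at hq
  omega

lemma pt (k : ℕ) : S 4 k
    = 1 * E 0 k + 24 * E 1 k + 276 * E 2 k + 1924 * E 3 k + 8976 * E 4 k + 29676 * E 5 k
      + 72064 * E 6 k + 131391 * E 7 k + 181989 * E 8 k + 192076 * E 9 k + 153600 * E 10 k
      + 91590 * E 11 k + 39490 * E 12 k + 11640 * E 13 k + 2100 * E 14 k + 175 * E 15 k := by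
  rw [S4_closed]
  rcases Nat.even_or_odd k with ⟨m, hm⟩ | ⟨m, hm⟩ <;> subst hm
  · have hd : (m + m)/2 + 1 = m + 1 := by omega
    rw [hd]
    simp only [E, HQ, Finset.prod_range_succ, Finset.prod_range_zero, Nat.factorial]
    push_cast
    ring
  · have hd : (2*m + 1)/2 + 1 = m + 1 := by omega
    rw [hd]
    simp only [E, HQ, Finset.prod_range_succ, Finset.prod_range_zero, Nat.factorial]
    push_cast
    ring

lemma mkS_eq : PowerSeries.mk (fun k => S 4 k)
    = ((C : ℚ →+* PowerSeries ℚ) 1) * PowerSeries.mk (fun k => E 0 k) + ((C : ℚ →+* PowerSeries ℚ) 24) * PowerSeries.mk (fun k => E 1 k)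
    + ((C : ℚ →+* PowerSeries ℚ) 276) * PowerSeries.mk (fun k => E 2 k) + ((C : ℚ →+* PowerSeries ℚ) 1924) * PowerSeries.mk (fun k => E 3 k)
    + ((C : ℚ →+* PowerSeries ℚ) 8976) * PowerSeries.mk (fun k => E 4 k) + ((C : ℚ →+* PowerSeries ℚ) 29676) * PowerSeries.mk (fun k => E 5 k)
    + ((C : ℚ →+* PowerSeries ℚ) 72064) * PowerSeries.mk (fun k => E 6 k) + ((C : ℚ →+* PowerSeries ℚ) 131391) * PowerSeries.mk (fun k => E 7 k)
    + ((C : ℚ →+* PowerSeries ℚ) 181989) * PowerSeries.mk (fun k => E 8 k) + ((C : ℚ →+* PowerSeries ℚ) 192076) * PowerSeries.mk (fun k => E 9 k)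
    + ((C : ℚ →+* PowerSeries ℚ) 153600) * PowerSeries.mk (fun k => E 10 k) + ((C : ℚ →+* PowerSeries ℚ) 91590) * PowerSeries.mk (fun k => E 11 k)
    + ((C : ℚ →+* PowerSeries ℚ) 39490) * PowerSeries.mk (fun k => E 12 k) + ((C : ℚ →+* PowerSeries ℚ) 11640) * PowerSeries.mk (fun k => E 13 k)
    + ((C : ℚ →+* PowerSeries ℚ) 2100) * PowerSeries.mk (fun k => E 14 k) + ((C : ℚ →+* PowerSeries ℚ) 175) * PowerSeries.mk (fun k => E 15 k) := by
  ext n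
  simp only [map_add, PowerSeries.coeff_C_mul, PowerSeries.coeff_mk]
  exact pt n

lemma mkD_eq : PowerSeries.mk (fun k => D 4 k)
    = (1 - X) * PowerSeries.mk (fun k => S 4 k) := by
  have h : ((1 - X) : PowerSeries ℚ) * PowerSeries.mk (fun k => S 4 k)
      = PowerSeries.mk (fun k => S 4 k) - X * PowerSeries.mk (fun k => S 4 k) := by ring
  rw [h]
  ext n
  cases n with
  | zero => simp [D]
  | succ n =>
    rw [map_sub, PowerSeries.coeff_succ_X_mul, PowerSeries.coeff_mk, PowerSeries.coeff_mk,
      PowerSeries.coeff_mk]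
    simp [D]

/-- The Poincaré series H_4(t) = Σ_{k≥0} D(4,k) tᵏ of Killing tensor dimensions
on ℂℙ^4 satisfies (1−t)^15 · H_4(t) = 1 + 9t + 45t² + 65t³ + 45t⁴ + 9t⁵ + t⁶. -/
theorem cpn_poincare_series_4 :
    ((1 - PowerSeries.X) ^ 15 : PowerSeries ℚ) * PowerSeries.mk (fun k => D 4 k)
      = 1 + 9 * PowerSeries.X + 45 * PowerSeries.X ^ 2 + 65 * PowerSeries.X ^ 3 + 45 * PowerSeries.X ^ 4 + 9 * PowerSeries.X ^ 5 + PowerSeries.X ^ 6 := by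
  rw [mkD_eq, ← mul_assoc, ← pow_succ]
  rw [mkS_eq]
  have expand : ((1 - X) ^ 16 : PowerSeries ℚ) * (((C : ℚ →+* PowerSeries ℚ) 1) * PowerSeries.mk (fun k => E 0 k) + ((C : ℚ →+* PowerSeries ℚ) 24) * PowerSeries.mk (fun k => E 1 k) + ((C : ℚ →+* PowerSeries ℚ) 276) * PowerSeries.mk (fun k => E 2 k) + ((C : ℚ →+* PowerSeries ℚ) 1924) * PowerSeries.mk (fun k => E 3 k) + ((C : ℚ →+* PowerSeries ℚ) 8976) * PowerSeries.mk (fun k => E 4 k) + ((C : ℚ →+* PowerSeries ℚ) 29676) * PowerSeries.mk (fun k => E 5 k) + ((C : ℚ →+* PowerSeries ℚ) 72064) * PowerSeries.mk (fun k => E 6 k) + ((C : ℚ →+* PowerSeries ℚ) 131391) * PowerSeries.mk (fun k => E 7 k) + ((C : ℚ →+* PowerSeries ℚ) 181989) * PowerSeries.mk (fun k => E 8 k) + ((C : ℚ →+* PowerSeries ℚ) 192076) * PowerSeries.mk (fun k => E 9 k) + ((C : ℚ →+* PowerSeries ℚ) 153600) * PowerSeries.mk (fun k => E 10 k) + ((C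 : ℚ →+* PowerSeries ℚ) 91590) * PowerSeries.mk (fun k => E 11 k) + ((C : ℚ →+* PowerSeries ℚ) 39490) * PowerSeries.mk (fun k => E 12 k) + ((C : ℚ →+* PowerSeries ℚ) 11640) * PowerSeries.mk (fun k => E 13 k) + ((C : ℚ →+* PowerSeries ℚ) 2100) * PowerSeries.mk (fun k => E 14 k) + ((C : ℚ →+* PowerSeries ℚ) 175) * PowerSeries.mk (fun k => E 15 k)) = ((C : ℚ →+* PowerSeries ℚ) 1) * (((1 - X) ^ 16 : PowerSeries ℚ) * PowerSeries.mk (fun k => E 0 k)) + ((C : ℚ →+* PowerSeries ℚ) 24) * (((1 - X) ^ 16 : PowerSeries ℚ) * PowerSeries.mk (fun k => E 1 k)) + ((C : ℚ →+* PowerSeries ℚ) 276) * (((1 - X) ^ 16 : PowerSeries ℚ) * PowerSeries.mk (fun k => E 2 k)) + ((C : ℚ →+* PowerSeries ℚ) 1924) * (((1 - X) ^ 16 : PowerSeries ℚ) * PowerSeries.mk (fun k => E 3 k)) + ((C : ℚ →+* PowerSeries ℚ) 8976) * (((1 - X) ^ 16 : PowerSeries ℚ) * PowerSeries.mk (fun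 k => E 4 k)) + ((C : ℚ →+* PowerSeries ℚ) 29676) * (((1 - X) ^ 16 : PowerSeries ℚ) * PowerSeries.mk (fun k => E 5 k)) + ((C : ℚ →+* PowerSeries ℚ) 72064) * (((1 - X) ^ 16 : PowerSeries ℚ) * PowerSeries.mk (fun k => E 6 k)) + ((C : ℚ →+* PowerSeries ℚ) 131391) * (((1 - X) ^ 16 : PowerSeries ℚ) * PowerSeries.mk (fun k => E 7 k)) + ((C : ℚ →+* PowerSeries ℚ) 181989) * (((1 - X) ^ 16 : PowerSeries ℚ) * PowerSeries.mk (fun k => E 8 k)) + ((C : ℚ →+* PowerSeries ℚ) 192076) * (((1 - X) ^ 16 : PowerSeries ℚ) * PowerSeries.mk (fun k => E 9 k)) + ((C : ℚ →+* PowerSeries ℚ) 153600) * (((1 - X) ^ 16 : PowerSeries ℚ) * PowerSeries.mk (fun k => E 10 k)) + ((C : ℚ →+* PowerSeries ℚ) 91590) * (((1 - X) ^ 16 : PowerSeries ℚ) * PowerSeries.mk (fun k => E 11 k)) + ((C : ℚ →+* PowerSeries ℚ) 39490) * (((1 - X) ^ 16 : PowerSeries ℚ) * PowerSeries.mk (fun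 k => E 12 k)) + ((C : ℚ →+* PowerSeries ℚ) 11640) * (((1 - X) ^ 16 : PowerSeries ℚ) * PowerSeries.mk (fun k => E 13 k)) + ((C : ℚ →+* PowerSeries ℚ) 2100) * (((1 - X) ^ 16 : PowerSeries ℚ) * PowerSeries.mk (fun k => E 14 k)) + ((C : ℚ →+* PowerSeries ℚ) 175) * (((1 - X) ^ 16 : PowerSeries ℚ) * PowerSeries.mk (fun k => E 15 k)) := by ring
  rw [expand]
  rw [keyB 0 (by norm_num), keyB 1 (by norm_num), keyB 2 (by norm_num), keyB 3 (by norm_num),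
    keyB 4 (by norm_num), keyB 5 (by norm_num), keyB 6 (by norm_num), keyB 7 (by norm_num),
    keyB 8 (by norm_num), keyB 9 (by norm_num), keyB 10 (by norm_num), keyB 11 (by norm_num),
    keyB 12 (by norm_num), keyB 13 (by norm_num), keyB 14 (by norm_num), keyB 15 (by norm_num)]
  norm_num
  simp only [map_ofNat, map_one]
  ring
end

section
/- Let μ : V × V → ℝ be an alternating bilinear form. Then the following are equivalent: (i) for all x, y, z, w ∈ V, μ(w, L(x,y)z) − μ(z, L(x,y)w) + μ(y, L(z,w)x) − μ(x, L(z,w)y) = 0 (i.e. μ satisfies the curvature-commutation condition R_{ab}{}^e{}_{[c}μ_{d]e} + R_{cd}{}^e{}_{[a}μ_{b]e} = 0 for the Fubini–Study curvature tensor); (ii) for all x, y ∈ V, μ(y, Jx) = μ(x, Jy) (i.e. the 2-form ξ_{ab} = J_{[a}{}^c μ_{b]c} vanishes); (iii) for all x, y ∈ V, μ(Jx, Jy) = μ(x, y) (i.e. μ is a real 2-form of type (1,1)). -/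
open scoped RealInnerProductSpace

/-- Let V be a finite-dimensional real inner product space with an orthogonal complex
structure J (J∘J = −id), ω(x,y) = ⟪Jx,y⟫ the Kähler form, and L(x,y) the curvature
operator of ℂℙⁿ, L(x,y)v = ⟪y,v⟫x − ⟪x,v⟫y + ω(y,v)Jx − ω(x,v)Jy + 2ω(x,y)Jv.
For an alternating bilinear form μ the following are equivalent:
(i) μ(w, L(x,y)z) − μ(z, L(x,y)w) + μ(y, L(z,w)x) − μ(x, L(z,w)y) = 0 for all x,y,z,w;
(ii) μ(y, Jx) = μ(x, Jy) for all x,y (i.e. ξ_{ab} = J_{[a}{}^c μ_{b]c} = 0);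
(iii) μ(Jx, Jy) = μ(x, y) for all x,y (i.e. μ is a real 2-form of type (1,1)). -/
theorem curvature_commutation_tfae
    {V : Type*} [NormedAddCommGroup V] [InnerProductSpace ℝ V] [FiniteDimensional ℝ V]
    (J : V →ₗ[ℝ] V) (hJiso : ∀ x y : V, ⟪J x, J y⟫ = ⟪x, y⟫)
    (hJJ : ∀ x : V, J (J x) = -x)
    (μ : V →ₗ[ℝ] V →ₗ[ℝ] ℝ) (hμalt : ∀ x : V, μ x x = 0)
    (ω : V → V → ℝ) (hω : ∀ x y : V, ω x y = ⟪J x, y⟫)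
    (L : V → V → V → V)
    (hL : ∀ x y v : V, L x y v =
      ⟪y, v⟫ • x - ⟪x, v⟫ • y + ω y v • J x - ω x v • J y + (2 * ω x y) • J v) :
    ((∀ x y z w : V,
        μ w (L x y z) - μ z (L x y w) + μ y (L z w x) - μ x (L z w y) = 0)
      ↔ (∀ x y : V, μ y (J x) = μ x (J y)))
    ∧ ((∀ x y : V, μ y (J x) = μ x (J y))
      ↔ (∀ x y : V, μ (J x) (J y) = μ x y)) := by
  -- μ is antisymmetric
  have hμa : ∀ x y : V, μ x y = - μ y x := by
    intro x y
    have h := hμalt (x + y)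
    simp only [map_add, LinearMap.add_apply, hμalt] at h
    linarith
  -- ω is antisymmetric (in inner product form)
  have hωa : ∀ x y : V, ⟪J x, y⟫ = - ⟪J y, x⟫ := by
    intro x y
    have h := hJiso (J x) y
    rw [hJJ] at h
    rw [← h, inner_neg_left, real_inner_comm]
  constructor
  · constructor
    · intro h x y
      by_cases hx : x = 0
      · simp [hx]
      · have hω0 : ∀ v : V, ⟪J v, v⟫ = 0 := by
          intro v; have := hωa v v; linarith
        have hω0' : ∀ v : V, ⟪v, J v⟫ = 0 := by
          intro v; rw [real_inner_comm]; exact hω0 v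
        have key := h x y x (J x)
        simp only [hL, hω, map_add, map_sub, map_smul, smul_eq_mul, hJJ, map_neg,
          inner_neg_left, inner_neg_right, hJiso, hμalt, hω0, hω0'] at key
        have hxx : ⟪x, x⟫ ≠ 0 := (inner_self_ne_zero (𝕜 := ℝ)).mpr hx
        have key2 : ⟪x, x⟫ * (μ y (J x) - μ x (J y)) = 0 := by
          linear_combination key + ⟪x, x⟫ * hμa y (J x) - ⟪y, x⟫ * hμa (J x) x
            - 2 * μ x (J x) * real_inner_comm y x
        rcases mul_eq_zero.mp key2 with h' | h'
        · exact absurd h' hxx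
        · linarith
    · intro h x y z w
      simp only [hL, hω, map_add, map_sub, map_smul, smul_eq_mul]
      linear_combination
        μ w x * real_inner_comm y z + ⟪z, y⟫ * hμa w x
        - (μ w y * real_inner_comm x z + ⟪z, x⟫ * hμa w y)
        - (μ z x * real_inner_comm y w + ⟪w, y⟫ * hμa z x)
        + μ z y * real_inner_comm x w + ⟪w, x⟫ * hμa z y
        + μ x (J w) * hωa z y + ⟪J y, z⟫ * h x w
        - (μ y (J w) * hωa z x + ⟪J x, z⟫ * h y w)
        + 2 * ⟪J x, y⟫ * h z w
        - (μ x (J z) * hωa w y + ⟪J y, w⟫ * h x z)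
        + μ y (J z) * hωa w x + ⟪J x, w⟫ * h y z
        + 2 * ⟪J z, w⟫ * h x y
        - 2 * μ w x * real_inner_comm y z + 2 * μ w y * real_inner_comm x z
        + 2 * μ z x * real_inner_comm y w - 2 * μ z y * real_inner_comm x w
  · constructor
    · intro h x y
      have h1 := h (J x) y
      rw [hJJ, map_neg] at h1
      linarith [h1, hμa y x]
    · intro h x y
      have h1 := h x (J y)
      rw [hJJ, map_neg] at h1
      linarith [h1, hμa (J x) y]
end
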